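/- arXiv:math/0511620 — 5 statements merged into one kernel-verified Lean document; each statement's English description precedes it below -/
import Mathlib

section
/- Let p and q be integers, not both zero, and let d = gcd(p,q). Define the curve γ : ℝ → Matrix (Fin 3) (Fin 3) ℂ by γ(θ) = diagonal(exp(2πipθ), exp(2πiqθ), exp(−2πi(p+q)θ)). Then the length of γ on [0, 1/d] with respect to the Killing norm, i.e. ∫_{0}^{1/d} √((1/2)·Re(trace(γ'(θ) · (γ'(θ))ᴴ))) dθ, equals (2π/d)·√(p² + q² + pq). -/
open Real Matrix

lemma hd_cexp (c : ℂ) (θ : ℝ) :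
    HasDerivAt (fun t : ℝ => Complex.exp (c * t)) (c * Complex.exp (c * θ)) θ := by
  have h1 : HasDerivAt (fun t : ℝ => c * (t : ℂ)) c θ := by
    simpa using (Complex.ofRealCLM.hasDerivAt (x := θ)).const_mul c
  simpa [mul_comm] using h1.cexp

lemma term_sq (c : ℂ) (hc : (starRingEnd ℂ) c = -c) (θ : ℝ) :
    (c * Complex.exp (c * θ)) * (starRingEnd ℂ) (c * Complex.exp (c * θ)) = -c^2 := by
  rw [_root_.map_mul, ← Complex.exp_conj, _root_.map_mul, hc, Complex.conj_ofReal]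
  rw [show (-c * ↑θ) = -(c * ↑θ) by ring, Complex.exp_neg]
  field_simp [Complex.exp_ne_zero]

/-- the length of the curve `γ(θ) = diag(e^{2πipθ}, e^{2πiqθ}, e^{-2πi(p+q)θ})`
parametrizing `T(p,q) ⊂ SU(3)` on `[0, 1/gcd(p,q)]` with respect to the Killing norm equals
`(2π/gcd(p,q))·√(p² + q² + pq)`. -/
theorem volume_T_pq (p q : ℤ) (hpq : ¬(p = 0 ∧ q = 0)) (d : ℕ) (hd : d = Int.gcd p q)
    (γ : ℝ → Matrix (Fin 3) (Fin 3) ℂ)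
    (hγ : ∀ θ : ℝ, γ θ = Matrix.diagonal
      ![Complex.exp (2 * (π : ℂ) * Complex.I * (p : ℂ) * (θ : ℂ)),
        Complex.exp (2 * (π : ℂ) * Complex.I * (q : ℂ) * (θ : ℂ)),
        Complex.exp (-(2 * (π : ℂ) * Complex.I * ((p : ℂ) + (q : ℂ)) * (θ : ℂ)))])
    (γ' : ℝ → Matrix (Fin 3) (Fin 3) ℂ)
    (hγ' : ∀ (θ : ℝ) (i j : Fin 3), γ' θ i j = deriv (fun t : ℝ => γ t i j) θ) :
    ∫ θ in (0 : ℝ)..(1 / (d : ℝ)),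
        Real.sqrt ((1 / 2) * (Matrix.trace (γ' θ * (γ' θ)ᴴ)).re)
      = (2 * π / (d : ℝ)) * Real.sqrt ((p : ℝ)^2 + (q : ℝ)^2 + (p : ℝ) * (q : ℝ)) := by
  set c : Fin 3 → ℂ := ![2*(π:ℂ)*Complex.I*p, 2*(π:ℂ)*Complex.I*q, -(2*(π:ℂ)*Complex.I*((p:ℂ)+q))] with hc
  have hder : ∀ (θ : ℝ) (i j : Fin 3),
      γ' θ i j = if i = j then c i * Complex.exp (c i * θ) else 0 := by
    intro θ i j
    rw [hγ']
    by_cases h : i = j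
    · subst h
      simp only [if_pos rfl]
      fin_cases i
      · have := (hd_cexp (2*(π:ℂ)*Complex.I*p) θ).deriv
        simp only [hγ]
        simpa [hc, Matrix.diagonal, mul_assoc] using this
      · have := (hd_cexp (2*(π:ℂ)*Complex.I*q) θ).deriv
        simp only [hγ]
        simpa [hc, Matrix.diagonal, mul_assoc] using this
      · have := (hd_cexp (-(2*(π:ℂ)*Complex.I*((p:ℂ)+q))) θ).deriv
        simp only [hγ]
        simpa [hc, Matrix.diagonal, mul_assoc, neg_mul] using this
    · simp only [if_neg h]
      have : (fun t : ℝ => γ t i j) = fun _ => 0 := by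
        funext t; simp [hγ, Matrix.diagonal, h]
      rw [this, deriv_const]
  set r : Fin 3 → ℝ := ![2*π*p, 2*π*q, -(2*π*(p+q))] with hrr
  have hcr : ∀ i : Fin 3, c i = ((r i : ℝ) : ℂ) * Complex.I := by
    intro i; fin_cases i <;> simp [hc, hrr] <;> push_cast <;> ring
  have hcs : ∀ i : Fin 3, (starRingEnd ℂ) (c i) = -(c i) := by
    intro i; rw [hcr]; simp [Complex.conj_I, mul_neg]
  have hsq : ∀ i : Fin 3, -(c i)^2 = (((r i)^2 : ℝ) : ℂ) := by
    intro i; rw [hcr, mul_pow, Complex.I_sq]; push_cast; ring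
  have htr : ∀ θ : ℝ, (1 / 2 : ℝ) * (Matrix.trace (γ' θ * (γ' θ)ᴴ)).re
      = (2*π)^2 * ((p:ℝ)^2 + (q:ℝ)^2 + (p:ℝ)*(q:ℝ)) := by
    intro θ
    have : Matrix.trace (γ' θ * (γ' θ)ᴴ) = -(c 0)^2 + -(c 1)^2 + -(c 2)^2 := by
      have t : ∀ i : Fin 3, c i * Complex.exp (c i * θ) *
          ((starRingEnd ℂ) (c i) * (starRingEnd ℂ) (Complex.exp (c i * θ))) = -(c i)^2 := by
        intro i
        rw [← term_sq (c i) (hcs i) θ, _root_.map_mul]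
      simp [Matrix.trace, Matrix.diag, Matrix.mul_apply, Matrix.conjTranspose_apply,
        Fin.sum_univ_three, hder, t 0, t 1, t 2]
    rw [this, hsq 0, hsq 1, hsq 2, ← Complex.ofReal_add, ← Complex.ofReal_add,
      Complex.ofReal_re]
    simp only [hrr, Matrix.cons_val_zero, Matrix.cons_val_one, Matrix.head_cons,
      Matrix.cons_val_two, Matrix.tail_cons]
    ring
  have hint : ∫ θ in (0:ℝ)..(1/(d:ℝ)),
      Real.sqrt ((1 / 2) * (Matrix.trace (γ' θ * (γ' θ)ᴴ)).re)
      = (1/(d:ℝ)) * Real.sqrt ((2*π)^2 * ((p:ℝ)^2 + (q:ℝ)^2 + (p:ℝ)*(q:ℝ))) := by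
    rw [intervalIntegral.integral_congr (g := fun _ =>
      Real.sqrt ((2*π)^2 * ((p:ℝ)^2 + (q:ℝ)^2 + (p:ℝ)*(q:ℝ))))]
    · simp
    · intro θ _
      show Real.sqrt ((1 / 2) * (Matrix.trace (γ' θ * (γ' θ)ᴴ)).re) = _
      rw [htr θ]
  rw [hint, Real.sqrt_mul (by positivity), Real.sqrt_sq (by positivity)]
  ring
end

section
/- The iterated integral (√3/512)·∫₀^{4π}∫₀^{π}∫₀^{2π}∫₀^{π}∫₀^{4π}∫₀^{π}∫₀^{2π}∫₀^{2π} sin β · sin θ · sin ξ · sin²(ξ/2) dτ dγ dβ dα dξ dψ dθ dφ equals √3·π⁵. -/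
open Real intervalIntegral

lemma integral_sin_sq_half : (∫ ξ in (0:ℝ)..π, Real.sin ξ * Real.sin (ξ/2)^2) = 1 := by
  have h : ∀ x ∈ Set.uIcc (0:ℝ) π,
      HasDerivAt (fun x : ℝ => Real.sin (x/2)^4) (Real.sin x * Real.sin (x/2)^2) x := by
    intro x _
    have h1 : HasDerivAt (fun x : ℝ => x/2) (1/2) x := (hasDerivAt_id x).div_const 2
    have h2 := (Real.hasDerivAt_sin (x/2)).comp x h1
    have h3 := h2.fun_pow 4
    refine h3.congr_deriv ?_
    have hs : Real.sin x = 2 * Real.sin (x/2) * Real.cos (x/2) := by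
      rw [← Real.sin_two_mul]; ring_nf
    simp only [Function.comp]; rw [hs]; push_cast; ring
  have := intervalIntegral.integral_eq_sub_of_hasDerivAt h
    (((Real.continuous_sin.mul ((Real.continuous_sin.comp
      (continuous_id.div_const 2)).pow 2))).intervalIntegrable 0 π)
  simpa using this

/-- integrating the Killing volume element of SU(3) in generalized
Euler angle coordinates over the coordinate ranges gives `Vol(SU(3),k) = √3·π⁵`. -/
theorem volume_SU3_killing :
    (Real.sqrt 3 / 512) *
      ∫ φ in (0:ℝ)..(4 * π), ∫ θ in (0:ℝ)..π, ∫ ψ in (0:ℝ)..(2 * π), ∫ ξ in (0:ℝ)..π,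
        ∫ α in (0:ℝ)..(4 * π), ∫ β in (0:ℝ)..π, ∫ γ in (0:ℝ)..(2 * π), ∫ τ in (0:ℝ)..(2 * π),
          Real.sin β * Real.sin θ * Real.sin ξ * Real.sin (ξ / 2) ^ 2
      = Real.sqrt 3 * π ^ 5 := by
  simp only [intervalIntegral.integral_const, smul_eq_mul, sub_zero,
    intervalIntegral.integral_const_mul, intervalIntegral.integral_mul_const,
    integral_sin, Real.cos_pi, Real.cos_zero]
  have key : ∀ x ξ : ℝ,
      (1 - -1) * Real.sin x * Real.sin ξ * (2 * π * (2 * π * (4 * π * Real.sin (ξ / 2) ^ 2)))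
        = (32 * π ^ 3 * Real.sin x) * (Real.sin ξ * Real.sin (ξ / 2) ^ 2) := by
    intro x ξ; ring
  simp_rw [key]
  simp only [intervalIntegral.integral_const_mul, integral_sin_sq_half, mul_one,
    integral_sin, Real.cos_pi, Real.cos_zero]
  ring
end

section
/- For every positive integer n, the real number x₁^{20} = [(178+1812n+7101n²+13455n³+12357n⁴+4401n⁵)·√(3+9n+9n²) − (13+54n+57n²)·√3·√(689+7847n+39387n²+113562n³+205110n⁴+236718n⁵+169641n⁶+68607n⁷+11907n⁸)] / [8·(−131−969n−2835n²−3870n³−1809n⁴+999n⁵+999n⁶)] satisfies (3+6n)/(8√(3+9n+9n²)) < x₁^{20} < (9+18n)/(8√(3+9n+9n²)). -/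
/-!
Put `V = B √(3RP)` and `Uᵢ = AP − cᵢQ` with `c₁ = 3 + 6x`, `c₂ = 9 + 18x`. Clearing the
denominators (using `√P² = P`), `x₁¹² < x₁²⁰` amounts to `0 < Q (U₁ − V)` and `x₁²⁰ < x₂¹²` to
`0 < Q (V − U₂)`. Both differences of squares are divisible by `Q`, namely `U₁² − V² = Q F₁` and
`V² − U₂² = Q F₂` with `F₁, F₂` having positive coefficients, so each product is
`Q² Fᵢ / (positive)`: the claim holds at every real `x ≥ 0` with `Q x ≠ 0`, whatever the sign
of `Q x` (it is negative at `x = 1` and positive for `x ≥ 2`). Finally `Q n ≡ 1 [ZMOD 3]`, so `Q`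
has no integer roots.
-/

open Real

section OrderedRing

variable {α : Type*} [CommRing α] [LinearOrder α] [IsStrictOrderedRing α]

theorem mul_sub_pos_of_sq_sub_sq_eq_mul {u v q f : α} (huv : 0 < u + v) (hq : q ≠ 0)
    (hf : 0 < f) (h : u ^ 2 - v ^ 2 = q * f) : 0 < q * (u - v) := by
  have hprod : q * (u - v) * (u + v) = q ^ 2 * f := by linear_combination q * h
  have : 0 < q * (u - v) * (u + v) := by rw [hprod]; positivity
  exact pos_of_mul_pos_left this huv.le

end OrderedRing

section OrderedField

variable {K : Type*} [Field K] [LinearOrder K] [IsStrictOrderedRing K]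

theorem div_lt_div_of_mul_sub_pos {b c q s : K} (hs : 0 < s) (h : 0 < q * (b * s - c * q)) :
    c / s < b / q := by
  have hq : q ≠ 0 := by rintro rfl; simp at h
  have hdiff : b / q - c / s = q * (b * s - c * q) / (q ^ 2 * s) := by field_simp
  rw [← sub_pos, hdiff]
  exact div_pos h (by positivity)

theorem div_lt_div_of_mul_sub_pos_swap {b c q s : K} (hs : 0 < s)
    (h : 0 < q * (c * q - b * s)) : b / q < c / s := by
  have := div_lt_div_of_mul_sub_pos (b := -b) (c := -c) hs (by linear_combination h)
  rwa [neg_div, neg_div, neg_lt_neg_iff] at this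

end OrderedField

namespace X20One

def A (x : ℝ) : ℝ := 178 + 1812 * x + 7101 * x ^ 2 + 13455 * x ^ 3 + 12357 * x ^ 4 + 4401 * x ^ 5

def B (x : ℝ) : ℝ := 13 + 54 * x + 57 * x ^ 2

def P (x : ℝ) : ℝ := 3 + 9 * x + 9 * x ^ 2

def Q (x : ℝ) : ℝ :=
  -131 - 969 * x - 2835 * x ^ 2 - 3870 * x ^ 3 - 1809 * x ^ 4 + 999 * x ^ 5 + 999 * x ^ 6

def R (x : ℝ) : ℝ :=
  689 + 7847 * x + 39387 * x ^ 2 + 113562 * x ^ 3 + 205110 * x ^ 4 + 236718 * x ^ 5 +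
    169641 * x ^ 6 + 68607 * x ^ 7 + 11907 * x ^ 8

noncomputable def x12One (x : ℝ) : ℝ := (3 + 6 * x) / (8 * √(P x))

noncomputable def x12Two (x : ℝ) : ℝ := (9 + 18 * x) / (8 * √(P x))

noncomputable def x20One (x : ℝ) : ℝ := (A x * √(P x) - B x * √3 * √(R x)) / (8 * Q x)

theorem sq_sub_sq_lower (x : ℝ) :
    (A x * P x - (3 + 6 * x) * Q x) ^ 2 - 3 * B x ^ 2 * R x * P x =
      Q x * (1440 + 19044 * x + 110412 * x ^ 2 + 366768 * x ^ 3 + 763668 * x ^ 4 +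
        1020276 * x ^ 5 + 853416 * x ^ 6 + 408240 * x ^ 7 + 85536 * x ^ 8) := by
  unfold A B P Q R; ring

theorem sq_sub_sq_upper (x : ℝ) :
    3 * B x ^ 2 * R x * P x - (A x * P x - (9 + 18 * x) * Q x) ^ 2 =
      Q x * (14400 + 185724 * x + 1049976 * x ^ 2 + 3395520 * x ^ 3 + 6856488 * x ^ 4 +
        8819280 * x ^ 5 + 7010064 * x ^ 6 + 3111372 * x ^ 7 + 577368 * x ^ 8) := by
  unfold A B P Q R; ring

theorem Q_intCast_ne_zero (m : ℤ) : Q m ≠ 0 := by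
  have hmod : -131 - 969 * m - 2835 * m ^ 2 - 3870 * m ^ 3 - 1809 * m ^ 4 + 999 * m ^ 5 +
      999 * m ^ 6 = 1 + 3 * (-44 - 323 * m - 945 * m ^ 2 - 1290 * m ^ 3 - 603 * m ^ 4 +
        333 * m ^ 5 + 333 * m ^ 6) := by ring
  have hne : -131 - 969 * m - 2835 * m ^ 2 - 3870 * m ^ 3 - 1809 * m ^ 4 + 999 * m ^ 5 +
      999 * m ^ 6 ≠ 0 := by omega
  unfold Q
  exact_mod_cast hne

noncomputable def V (x : ℝ) : ℝ := B x * √3 * √(R x) * √(P x)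

variable {x : ℝ}

theorem P_pos (hx : 0 ≤ x) : 0 < P x := by unfold P; positivity

theorem V_nonneg (hx : 0 ≤ x) : 0 ≤ V x := by unfold V B; positivity

theorem V_sq (hx : 0 ≤ x) : V x ^ 2 = 3 * B x ^ 2 * R x * P x := by
  have hR : 0 ≤ R x := by unfold R; positivity
  rw [V, mul_pow, mul_pow, mul_pow, sq_sqrt hR, sq_sqrt (P_pos hx).le, sq_sqrt zero_le_three]
  ring

theorem x12One_lt_x20One (hx : 0 ≤ x) (hQ : Q x ≠ 0) : x12One x < x20One x := by
  have hU : 0 < A x * P x - (3 + 6 * x) * Q x := by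
    unfold A P Q; ring_nf; positivity
  have key := mul_sub_pos_of_sq_sub_sq_eq_mul (by linarith [V_nonneg hx]) hQ (by positivity)
    ((V_sq hx).symm ▸ sq_sub_sq_lower x)
  refine div_lt_div_of_mul_sub_pos (by have := P_pos hx; positivity) ?_
  unfold V at key
  linear_combination 64 * key - 64 * Q x * A x * sq_sqrt (P_pos hx).le

theorem x20One_lt_x12Two (hx : 0 ≤ x) (hQ : Q x ≠ 0) : x20One x < x12Two x := by
  have hU : 0 < A x * P x - (9 + 18 * x) * Q x := by
    unfold A P Q; ring_nf; positivity
  have key := mul_sub_pos_of_sq_sub_sq_eq_mul (by linarith [V_nonneg hx]) hQ (by positivity)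
    ((V_sq hx).symm ▸ sq_sub_sq_upper x)
  refine div_lt_div_of_mul_sub_pos_swap (by have := P_pos hx; positivity) ?_
  unfold V at key
  linear_combination 64 * key + 64 * Q x * A x * sq_sqrt (P_pos hx).le

end X20One

theorem x20_one_between_general (n : ℕ) :
    (3 + 6 * (n : ℝ)) / (8 * Real.sqrt (3 + 9 * (n : ℝ) + 9 * (n : ℝ) ^ 2)) <
      ((178 + 1812 * (n : ℝ) + 7101 * (n : ℝ) ^ 2 + 13455 * (n : ℝ) ^ 3 + 12357 * (n : ℝ) ^ 4 +
            4401 * (n : ℝ) ^ 5) * Real.sqrt (3 + 9 * (n : ℝ) + 9 * (n : ℝ) ^ 2) -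
          (13 + 54 * (n : ℝ) + 57 * (n : ℝ) ^ 2) * Real.sqrt 3 *
            Real.sqrt (689 + 7847 * (n : ℝ) + 39387 * (n : ℝ) ^ 2 + 113562 * (n : ℝ) ^ 3 +
              205110 * (n : ℝ) ^ 4 + 236718 * (n : ℝ) ^ 5 + 169641 * (n : ℝ) ^ 6 +
              68607 * (n : ℝ) ^ 7 + 11907 * (n : ℝ) ^ 8)) /
        (8 * (-131 - 969 * (n : ℝ) - 2835 * (n : ℝ) ^ 2 - 3870 * (n : ℝ) ^ 3 -
          1809 * (n : ℝ) ^ 4 + 999 * (n : ℝ) ^ 5 + 999 * (n : ℝ) ^ 6)) ∧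
    ((178 + 1812 * (n : ℝ) + 7101 * (n : ℝ) ^ 2 + 13455 * (n : ℝ) ^ 3 + 12357 * (n : ℝ) ^ 4 +
          4401 * (n : ℝ) ^ 5) * Real.sqrt (3 + 9 * (n : ℝ) + 9 * (n : ℝ) ^ 2) -
        (13 + 54 * (n : ℝ) + 57 * (n : ℝ) ^ 2) * Real.sqrt 3 *
          Real.sqrt (689 + 7847 * (n : ℝ) + 39387 * (n : ℝ) ^ 2 + 113562 * (n : ℝ) ^ 3 +
            205110 * (n : ℝ) ^ 4 + 236718 * (n : ℝ) ^ 5 + 169641 * (n : ℝ) ^ 6 +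
            68607 * (n : ℝ) ^ 7 + 11907 * (n : ℝ) ^ 8)) /
      (8 * (-131 - 969 * (n : ℝ) - 2835 * (n : ℝ) ^ 2 - 3870 * (n : ℝ) ^ 3 -
        1809 * (n : ℝ) ^ 4 + 999 * (n : ℝ) ^ 5 + 999 * (n : ℝ) ^ 6)) <
      (9 + 18 * (n : ℝ)) / (8 * Real.sqrt (3 + 9 * (n : ℝ) + 9 * (n : ℝ) ^ 2)) := by
  have hx : (0 : ℝ) ≤ n := n.cast_nonneg
  have hQ : X20One.Q n ≠ 0 := by exact_mod_cast X20One.Q_intCast_ne_zero n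
  exact ⟨X20One.x12One_lt_x20One hx hQ, X20One.x20One_lt_x12Two hx hQ⟩

/-- the root `x₁²⁰` of `λ₂(x) = λ₀(x)` for `W(n,n+1)` lies strictly between
the two roots `x₁¹² = (3+6n)/(8√(3+9n+9n²))` and `x₂¹² = (9+18n)/(8√(3+9n+9n²))`
of `λ₁(x) = λ₂(x)`. -/
theorem x20_one_between (n : ℕ) (hn : 1 ≤ n) :
    (3 + 6 * (n : ℝ)) / (8 * Real.sqrt (3 + 9 * (n : ℝ) + 9 * (n : ℝ) ^ 2)) <
      ((178 + 1812 * (n : ℝ) + 7101 * (n : ℝ) ^ 2 + 13455 * (n : ℝ) ^ 3 + 12357 * (n : ℝ) ^ 4 +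
            4401 * (n : ℝ) ^ 5) * Real.sqrt (3 + 9 * (n : ℝ) + 9 * (n : ℝ) ^ 2) -
          (13 + 54 * (n : ℝ) + 57 * (n : ℝ) ^ 2) * Real.sqrt 3 *
            Real.sqrt (689 + 7847 * (n : ℝ) + 39387 * (n : ℝ) ^ 2 + 113562 * (n : ℝ) ^ 3 +
              205110 * (n : ℝ) ^ 4 + 236718 * (n : ℝ) ^ 5 + 169641 * (n : ℝ) ^ 6 +
              68607 * (n : ℝ) ^ 7 + 11907 * (n : ℝ) ^ 8)) /
        (8 * (-131 - 969 * (n : ℝ) - 2835 * (n : ℝ) ^ 2 - 3870 * (n : ℝ) ^ 3 -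
          1809 * (n : ℝ) ^ 4 + 999 * (n : ℝ) ^ 5 + 999 * (n : ℝ) ^ 6)) ∧
    ((178 + 1812 * (n : ℝ) + 7101 * (n : ℝ) ^ 2 + 13455 * (n : ℝ) ^ 3 + 12357 * (n : ℝ) ^ 4 +
          4401 * (n : ℝ) ^ 5) * Real.sqrt (3 + 9 * (n : ℝ) + 9 * (n : ℝ) ^ 2) -
        (13 + 54 * (n : ℝ) + 57 * (n : ℝ) ^ 2) * Real.sqrt 3 *
          Real.sqrt (689 + 7847 * (n : ℝ) + 39387 * (n : ℝ) ^ 2 + 113562 * (n : ℝ) ^ 3 +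
            205110 * (n : ℝ) ^ 4 + 236718 * (n : ℝ) ^ 5 + 169641 * (n : ℝ) ^ 6 +
            68607 * (n : ℝ) ^ 7 + 11907 * (n : ℝ) ^ 8)) /
      (8 * (-131 - 969 * (n : ℝ) - 2835 * (n : ℝ) ^ 2 - 3870 * (n : ℝ) ^ 3 -
        1809 * (n : ℝ) ^ 4 + 999 * (n : ℝ) ^ 5 + 999 * (n : ℝ) ^ 6)) <
      (9 + 18 * (n : ℝ)) / (8 * Real.sqrt (3 + 9 * (n : ℝ) + 9 * (n : ℝ) ^ 2)) :=
  x20_one_between_general n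
end

section
/- For every positive integer n, max{2 − 3/(2(1+3n+3n²)), 4 − 9n²/(8(1+3n+3n²)), 4 − 9(1+n)²/(8(1+3n+3n²)), 3(1+2n)²/(2(1+3n+3n²))} = 4 − 9n²/(8(1+3n+3n²)), and moreover 39 + 138n + 141n² > √(961 + 5556n + 13014n² + 14580n³ + 6561n⁴). -/
open Real

/-- for every positive integer `n`,
`max{a₀, a₁, a₂, c₀} = a₁ = 4 − 9n²/(8(1+3n+3n²))`, and moreover
`39 + 138n + 141n² > √(961 + 5556n + 13014n² + 14580n³ + 6561n⁴)`. -/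
theorem Lambda_zero_eq_a_one (n : ℕ) (hn : 1 ≤ n) :
    max (2 - 3 / (2 * (1 + 3 * (n : ℝ) + 3 * (n : ℝ) ^ 2)))
        (max (4 - 9 * (n : ℝ) ^ 2 / (8 * (1 + 3 * (n : ℝ) + 3 * (n : ℝ) ^ 2)))
          (max (4 - 9 * (1 + (n : ℝ)) ^ 2 / (8 * (1 + 3 * (n : ℝ) + 3 * (n : ℝ) ^ 2)))
            (3 * (1 + 2 * (n : ℝ)) ^ 2 / (2 * (1 + 3 * (n : ℝ) + 3 * (n : ℝ) ^ 2)))))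
      = 4 - 9 * (n : ℝ) ^ 2 / (8 * (1 + 3 * (n : ℝ) + 3 * (n : ℝ) ^ 2)) ∧
    Real.sqrt (961 + 5556 * (n : ℝ) + 13014 * (n : ℝ) ^ 2 + 14580 * (n : ℝ) ^ 3 +
        6561 * (n : ℝ) ^ 4) <
      39 + 138 * (n : ℝ) + 141 * (n : ℝ) ^ 2 := by
  have hx : (1 : ℝ) ≤ (n : ℝ) := by exact_mod_cast hn
  have hD : (0 : ℝ) < 1 + 3 * (n : ℝ) + 3 * (n : ℝ) ^ 2 := by nlinarith
  constructor
  · have h2 : 4 - 9 * (1 + (n : ℝ)) ^ 2 / (8 * (1 + 3 * (n : ℝ) + 3 * (n : ℝ) ^ 2)) ≤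
        4 - 9 * (n : ℝ) ^ 2 / (8 * (1 + 3 * (n : ℝ) + 3 * (n : ℝ) ^ 2)) := by
      rw [sub_le_sub_iff_left, div_le_div_iff₀ (by linarith) (by linarith)]
      nlinarith
    have h3 : 3 * (1 + 2 * (n : ℝ)) ^ 2 / (2 * (1 + 3 * (n : ℝ) + 3 * (n : ℝ) ^ 2)) ≤
        4 - 9 * (n : ℝ) ^ 2 / (8 * (1 + 3 * (n : ℝ) + 3 * (n : ℝ) ^ 2)) := by
      rw [← mul_le_mul_iff_of_pos_right (show (0:ℝ) < 8 * (1 + 3 * (n : ℝ) + 3 * (n : ℝ) ^ 2) by linarith)]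
      field_simp
      nlinarith
    have h0 : 2 - 3 / (2 * (1 + 3 * (n : ℝ) + 3 * (n : ℝ) ^ 2)) ≤
        4 - 9 * (n : ℝ) ^ 2 / (8 * (1 + 3 * (n : ℝ) + 3 * (n : ℝ) ^ 2)) := by
      have : 9 * (n : ℝ) ^ 2 / (8 * (1 + 3 * (n : ℝ) + 3 * (n : ℝ) ^ 2)) ≤ 2 := by
        rw [div_le_iff₀ (by linarith)]; nlinarith
      have h3' : 0 ≤ 3 / (2 * (1 + 3 * (n : ℝ) + 3 * (n : ℝ) ^ 2)) := by positivity
      linarith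
    rw [max_eq_left (max_le h2 h3), max_eq_right h0]
  · rw [show (39 + 138 * (n : ℝ) + 141 * (n : ℝ) ^ 2) =
        Real.sqrt ((39 + 138 * (n : ℝ) + 141 * (n : ℝ) ^ 2) ^ 2) from
        (Real.sqrt_sq (by nlinarith)).symm]
    apply Real.sqrt_lt_sqrt (by nlinarith)
    nlinarith
end

section
/- Let ν₁ = (4+12n+33n² + √(400+2976n+8640n²+11664n³+6561n⁴))/(16(1+3n+3n²)) and ν₂ = (25+54n+33n² + √(961+5556n+13014n²+14580n³+6561n⁴))/(16(1+3n+3n²)). Then for every positive integer n: ν₁ is the largest eigenvalue of the symmetric real 2×2 matrix [[c₁, √2(ξ₁−ξ₀)], [√2(ξ₁−ξ₀), 2d₁−b₁]] and ν₂ is the largest eigenvalue of the symmetric real 2×2 matrix [[c₂, √2(ξ₂−ξ₀)], [√2(ξ₂−ξ₀), 2d₂−b₂]], and ν₂ > ν₁. -/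
open Real Matrix

/-! The eigenvalues of `!![α, β; β, δ]` are the roots of `(μ - α)(μ - δ) = β²`; completing the
square, the largest one is `(α + δ)/2 + √(((α - δ)/2)² + β²)`. For both blocks the mean of the
diagonal and this discriminant are rational in `n` with denominators `16(1 + 3n + 3n²)` and its
square (the `√(3 + 9n + 9n²)` in the `ξᵢ` cancels on squaring), which gives the closed forms of
`ν₁` and `ν₂`; their numerators then compare termwise. -/

theorem exists_ne_zero_mulVec_eq_smul_iff_fin_two {α β γ δ μ : ℝ} :
    (∃ v : Fin 2 → ℝ, v ≠ 0 ∧ !![α, β; γ, δ] *ᵥ v = μ • v) ↔ (μ - α) * (μ - δ) = β * γ := by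
  have hshift : ∀ v : Fin 2 → ℝ,
      !![α, β; γ, δ] *ᵥ v = μ • v ↔ !![α - μ, β; γ, δ - μ] *ᵥ v = 0 := by
    intro v
    rw [← sub_eq_zero]
    constructor <;> intro h <;> ext i <;> have := congrFun h i <;> fin_cases i <;>
      simp [mulVec, dotProduct, Fin.sum_univ_two] at this ⊢ <;> linarith
  simp_rw [hshift]
  rw [exists_mulVec_eq_zero_iff, det_fin_two_of]
  constructor <;> intro h <;> linarith

theorem isGreatest_setOf_sub_mul_sub_eq_sq (α β δ : ℝ) :
    IsGreatest {μ : ℝ | (μ - α) * (μ - δ) = β ^ 2}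
      ((α + δ) / 2 + √(((α - δ) / 2) ^ 2 + β ^ 2)) := by
  have hs : √(((α - δ) / 2) ^ 2 + β ^ 2) ^ 2 = ((α - δ) / 2) ^ 2 + β ^ 2 :=
    sq_sqrt (by positivity)
  -- `(μ - α)(μ - δ) - β² = (μ - (α + δ)/2)² - (((α - δ)/2)² + β²)`
  refine ⟨by show _ = _; linear_combination hs, fun μ (hμ : (μ - α) * (μ - δ) = β ^ 2) => ?_⟩
  have hroot : (μ - (α + δ) / 2) ^ 2 = ((α - δ) / 2) ^ 2 + β ^ 2 := by linear_combination hμ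
  linarith [le_sqrt_of_sq_le hroot.le]

theorem isGreatest_eigenvalues_fin_two_symm {α β δ a p q : ℝ} (hq : 0 < q)
    (hmean : (α + δ) / 2 = a / q) (hdisc : ((α - δ) / 2) ^ 2 + β ^ 2 = p / q ^ 2) :
    IsGreatest {μ : ℝ | ∃ v : Fin 2 → ℝ, v ≠ 0 ∧ !![α, β; β, δ] *ᵥ v = μ • v}
      ((a + √p) / q) := by
  simp_rw [exists_ne_zero_mulVec_eq_smul_iff_fin_two, ← sq]
  convert isGreatest_setOf_sub_mul_sub_eq_sq α β δ using 1
  rw [hmean, hdisc, sqrt_div' _ (by positivity), sqrt_sq hq.le, add_div]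

theorem sq_sqrt_two_mul_div_sub_div {s : ℝ} (hs : 0 ≤ s) (a b : ℝ) :
    (√2 * (a / (8 * √s) - b / (8 * √s))) ^ 2 = (a - b) ^ 2 / (32 * s) := by
  rw [← sub_div, mul_pow, div_pow, mul_pow, sq_sqrt zero_le_two, sq_sqrt hs]
  ring

theorem nu_largest_eigenvalues_general (n : ℕ)
    (ξ₀ ξ₁ ξ₂ c₁ c₂ d₁ d₂ b₁ b₂ ν₁ ν₂ : ℝ)
    (hξ₀ : ξ₀ = -(9 * (1 + 2 * (n : ℝ))) / (8 * Real.sqrt (3 + 9 * (n : ℝ) + 9 * (n : ℝ) ^ 2)))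
    (hξ₁ : ξ₁ = 3 * (1 + 3 * (n : ℝ)) / (8 * Real.sqrt (3 + 9 * (n : ℝ) + 9 * (n : ℝ) ^ 2)))
    (hξ₂ : ξ₂ = 3 * (2 + 3 * (n : ℝ)) / (8 * Real.sqrt (3 + 9 * (n : ℝ) + 9 * (n : ℝ) ^ 2)))
    (hc₁ : c₁ = 3 * (n : ℝ) ^ 2 / (8 * (1 + 3 * (n : ℝ) + 3 * (n : ℝ) ^ 2)))
    (hc₂ : c₂ = 3 * (1 + (n : ℝ)) ^ 2 / (8 * (1 + 3 * (n : ℝ) + 3 * (n : ℝ) ^ 2)))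
    (hd₁ : d₁ = 1 / 8) (hd₂ : d₂ = 1 / 8)
    (hb₁ : b₁ = -(1 + 3 * (n : ℝ) + 12 * (n : ℝ) ^ 2) / (4 * (1 + 3 * (n : ℝ) + 3 * (n : ℝ) ^ 2)))
    (hb₂ : b₂ =
      -(10 + 21 * (n : ℝ) + 12 * (n : ℝ) ^ 2) / (4 * (1 + 3 * (n : ℝ) + 3 * (n : ℝ) ^ 2)))
    (hν₁ : ν₁ = (4 + 12 * (n : ℝ) + 33 * (n : ℝ) ^ 2 +
        Real.sqrt (400 + 2976 * (n : ℝ) + 8640 * (n : ℝ) ^ 2 + 11664 * (n : ℝ) ^ 3 +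
          6561 * (n : ℝ) ^ 4)) / (16 * (1 + 3 * (n : ℝ) + 3 * (n : ℝ) ^ 2)))
    (hν₂ : ν₂ = (25 + 54 * (n : ℝ) + 33 * (n : ℝ) ^ 2 +
        Real.sqrt (961 + 5556 * (n : ℝ) + 13014 * (n : ℝ) ^ 2 + 14580 * (n : ℝ) ^ 3 +
          6561 * (n : ℝ) ^ 4)) / (16 * (1 + 3 * (n : ℝ) + 3 * (n : ℝ) ^ 2))) :
    IsGreatest {μ : ℝ | ∃ v : Fin 2 → ℝ, v ≠ 0 ∧
        Matrix.mulVec !![c₁, Real.sqrt 2 * (ξ₁ - ξ₀); Real.sqrt 2 * (ξ₁ - ξ₀), 2 * d₁ - b₁] v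
          = μ • v} ν₁ ∧
    IsGreatest {μ : ℝ | ∃ v : Fin 2 → ℝ, v ≠ 0 ∧
        Matrix.mulVec !![c₂, Real.sqrt 2 * (ξ₂ - ξ₀); Real.sqrt 2 * (ξ₂ - ξ₀), 2 * d₂ - b₂] v
          = μ • v} ν₂ ∧
    ν₁ < ν₂ := by
  subst hξ₀ hξ₁ hξ₂ hc₁ hc₂ hd₁ hd₂ hb₁ hb₂ hν₁ hν₂
  set N : ℝ := (n : ℝ)
  have hN : 0 ≤ N := Nat.cast_nonneg n
  have hQ : 0 < 1 + 3 * N + 3 * N ^ 2 := by positivity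
  have hS : 0 ≤ 3 + 9 * N + 9 * N ^ 2 := by positivity
  refine ⟨isGreatest_eigenvalues_fin_two_symm (by positivity) ?mean₁ ?disc₁,
    isGreatest_eigenvalues_fin_two_symm (by positivity) ?mean₂ ?disc₂, ?_⟩
  case mean₁ | mean₂ => field_simp; ring
  case disc₁ | disc₂ => rw [sq_sqrt_two_mul_div_sub_div hS]; field_simp; ring
  gcongr ?_ / _
  have hsqrt := sqrt_le_sqrt (show 400 + 2976 * N + 8640 * N ^ 2 + 11664 * N ^ 3 + 6561 * N ^ 4
    ≤ 961 + 5556 * N + 13014 * N ^ 2 + 14580 * N ^ 3 + 6561 * N ^ 4 by nlinarith)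
  linarith

/-- `ν₁` and `ν₂` are the largest eigenvalues of the symmetric 2×2 blocks
`[[c₁, √2(ξ₁−ξ₀)], [√2(ξ₁−ξ₀), 2d₁−b₁]]` and `[[c₂, √2(ξ₂−ξ₀)], [√2(ξ₂−ξ₀), 2d₂−b₂]]`
of the modified curvature operator of `W(n,n+1)`, and `ν₂ > ν₁`. -/
theorem nu_largest_eigenvalues (n : ℕ) (hn : 1 ≤ n)
    (ξ₀ ξ₁ ξ₂ c₁ c₂ d₁ d₂ b₁ b₂ ν₁ ν₂ : ℝ)
    (hξ₀ : ξ₀ = -(9 * (1 + 2 * (n : ℝ))) / (8 * Real.sqrt (3 + 9 * (n : ℝ) + 9 * (n : ℝ) ^ 2)))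
    (hξ₁ : ξ₁ = 3 * (1 + 3 * (n : ℝ)) / (8 * Real.sqrt (3 + 9 * (n : ℝ) + 9 * (n : ℝ) ^ 2)))
    (hξ₂ : ξ₂ = 3 * (2 + 3 * (n : ℝ)) / (8 * Real.sqrt (3 + 9 * (n : ℝ) + 9 * (n : ℝ) ^ 2)))
    (hc₁ : c₁ = 3 * (n : ℝ) ^ 2 / (8 * (1 + 3 * (n : ℝ) + 3 * (n : ℝ) ^ 2)))
    (hc₂ : c₂ = 3 * (1 + (n : ℝ)) ^ 2 / (8 * (1 + 3 * (n : ℝ) + 3 * (n : ℝ) ^ 2)))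
    (hd₁ : d₁ = 1 / 8) (hd₂ : d₂ = 1 / 8)
    (hb₁ : b₁ = -(1 + 3 * (n : ℝ) + 12 * (n : ℝ) ^ 2) / (4 * (1 + 3 * (n : ℝ) + 3 * (n : ℝ) ^ 2)))
    (hb₂ : b₂ =
      -(10 + 21 * (n : ℝ) + 12 * (n : ℝ) ^ 2) / (4 * (1 + 3 * (n : ℝ) + 3 * (n : ℝ) ^ 2)))
    (hν₁ : ν₁ = (4 + 12 * (n : ℝ) + 33 * (n : ℝ) ^ 2 +
        Real.sqrt (400 + 2976 * (n : ℝ) + 8640 * (n : ℝ) ^ 2 + 11664 * (n : ℝ) ^ 3 +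
          6561 * (n : ℝ) ^ 4)) / (16 * (1 + 3 * (n : ℝ) + 3 * (n : ℝ) ^ 2)))
    (hν₂ : ν₂ = (25 + 54 * (n : ℝ) + 33 * (n : ℝ) ^ 2 +
        Real.sqrt (961 + 5556 * (n : ℝ) + 13014 * (n : ℝ) ^ 2 + 14580 * (n : ℝ) ^ 3 +
          6561 * (n : ℝ) ^ 4)) / (16 * (1 + 3 * (n : ℝ) + 3 * (n : ℝ) ^ 2))) :
    IsGreatest {μ : ℝ | ∃ v : Fin 2 → ℝ, v ≠ 0 ∧
        Matrix.mulVec !![c₁, Real.sqrt 2 * (ξ₁ - ξ₀); Real.sqrt 2 * (ξ₁ - ξ₀), 2 * d₁ - b₁] v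
          = μ • v} ν₁ ∧
    IsGreatest {μ : ℝ | ∃ v : Fin 2 → ℝ, v ≠ 0 ∧
        Matrix.mulVec !![c₂, Real.sqrt 2 * (ξ₂ - ξ₀); Real.sqrt 2 * (ξ₂ - ξ₀), 2 * d₂ - b₂] v
          = μ • v} ν₂ ∧
    ν₁ < ν₂ :=
  nu_largest_eigenvalues_general n ξ₀ ξ₁ ξ₂ c₁ c₂ d₁ d₂ b₁ b₂ ν₁ ν₂ hξ₀ hξ₁ hξ₂ hc₁ hc₂ hd₁ hd₂ hb₁
    hb₂ hν₁ hν₂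
end
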